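/- In the kernel setting with ux ∈ ℤⁿ, assume the sortedness condition T_1·ux_1 − α_1 ≥ T_2·ux_2 − α_2 ≥ … ≥ T_n·ux_n − α_n. Let i satisfy 1 ≤ i ≤ n−1 and suppose f(i−1) is well-defined (i.e., 1 − Σ_{j∈[n]∖[i−1]} U_j > 0). If i is a local minimum point of f, i.e., f(i) ≤ f(i−1) and f(i) ≤ f(i+1), then f(i−1) = f(i) = f(i+1). -/

import Mathlib

/-!
Write `U_j = C_j / T_j`, `D(m) = 1 - ∑_{j > m} U_j` and `g_j = T_j ux_j - α_j`. Passing from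
`m` to `m + 1` adds `U_{m+1}` to the denominator of `f` and `U_{m+1} g_{m+1}` to its numerator,
so `f(m + 1)` is a proper convex combination of `f(m)` and `g_{m+1}`. At a local minimum `i`,
`f(i) ≤ f(i - 1)` forces `g_i ≤ f(i)` and `f(i) ≤ f(i + 1)` forces `f(i) ≤ g_{i+1}`; sortedness
gives `g_{i+1} ≤ g_i`, so all of these coincide and both convex combinations are trivial.
-/

open Finset AffineMap

theorem sum_Icc_eq_add_sum_Icc_succ {M : Type*} [AddCommMonoid M] (g : ℕ → M) {a b : ℕ}
    (h : a ≤ b) : ∑ j ∈ Icc a b, g j = g a + ∑ j ∈ Icc (a + 1) b, g j := by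
  rw [Icc_add_one_left_eq_Ioc, add_sum_Ioc_eq_sum_Icc h]

theorem exists_eq_lineMap_of_succ {n m : ℕ} {C T α ux : ℕ → ℤ} {β : ℤ} {f : ℕ → ℚ}
    (hf : ∀ m : ℕ, f m =
      ((β : ℚ) + ∑ j ∈ Icc (m + 1) n, (C j : ℚ) / (T j : ℚ) * (α j : ℚ) +
        ∑ j ∈ Icc 1 m, (C j : ℚ) * (ux j : ℚ)) /
      (1 - ∑ j ∈ Icc (m + 1) n, (C j : ℚ) / (T j : ℚ)))
    (hm : m + 1 ≤ n) (hU : 0 < (C (m + 1) : ℚ) / T (m + 1))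
    (hD : 0 < 1 - ∑ j ∈ Icc (m + 1) n, (C j : ℚ) / T j) :
    ∃ r ∈ Set.Ioo (0 : ℚ) 1,
      f (m + 1) = lineMap (f m) ((T (m + 1) * ux (m + 1) - α (m + 1) : ℤ) : ℚ) r := by
  have hT : (T (m + 1) : ℚ) ≠ 0 := by
    rintro h
    simp [h] at hU
  -- after this rewrite `C (m + 1)` occurs only inside `U_{m+1}`, which can then be generalized
  have hCux : (C (m + 1) : ℚ) * ux (m + 1) =
      C (m + 1) / T (m + 1) * (T (m + 1) * ux (m + 1)) := by
    field_simp
  rw [hf (m + 1), hf m, sum_Icc_succ_top (by omega), hCux]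
  rw [sum_Icc_eq_add_sum_Icc_succ _ hm] at hD ⊢
  rw [sum_Icc_eq_add_sum_Icc_succ _ hm]
  push_cast
  generalize ∑ j ∈ Icc (m + 1 + 1) n, (C j : ℚ) / T j = S at hD ⊢
  generalize (C (m + 1) : ℚ) / T (m + 1) = U at hU hD ⊢
  have hS : 0 < 1 - S := by linarith
  refine ⟨U / (1 - S), ⟨by positivity, (div_lt_one hS).2 (by linarith)⟩, ?_⟩
  rw [lineMap_apply_ring]
  field_simp
  ring

theorem stmt_10_general (n : ℕ) (C T α ux : ℕ → ℤ) (β : ℤ)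
    (hC : ∀ i ∈ Finset.Icc 1 n, 0 < C i)
    (hT : ∀ i ∈ Finset.Icc 1 n, 0 < T i)
    (sorted : ∀ i j : ℕ, 1 ≤ i → i ≤ j → j ≤ n →
      T j * ux j - α j ≤ T i * ux i - α i)
    (f : ℕ → ℚ)
    (hf : ∀ m : ℕ, f m =
      ((β : ℚ) + ∑ j ∈ Finset.Icc (m + 1) n, (C j : ℚ) / (T j : ℚ) * (α j : ℚ) +
        ∑ j ∈ Finset.Icc 1 m, (C j : ℚ) * (ux j : ℚ)) /
      (1 - ∑ j ∈ Finset.Icc (m + 1) n, (C j : ℚ) / (T j : ℚ)))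
    (i : ℕ) (hi1 : 1 ≤ i) (hin : i ≤ n - 1)
    (hwd : 0 < 1 - ∑ j ∈ Finset.Icc i n, (C j : ℚ) / (T j : ℚ))
    (hlocmin1 : f i ≤ f (i - 1)) (hlocmin2 : f i ≤ f (i + 1)) :
    f (i - 1) = f i ∧ f i = f (i + 1) := by
  obtain ⟨m, rfl⟩ : ∃ m, i = m + 1 := ⟨i - 1, by omega⟩
  rw [Nat.add_sub_cancel] at hlocmin1 ⊢
  have hUpos : ∀ j ∈ Icc 1 n, 0 < (C j : ℚ) / T j := fun j hj =>
    div_pos (by exact_mod_cast hC j hj) (by exact_mod_cast hT j hj)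
  have hwd' : 0 < 1 - ∑ j ∈ Icc (m + 2) n, (C j : ℚ) / T j := by
    refine hwd.trans_le (sub_le_sub_left (sum_le_sum_of_subset_of_nonneg
      (Icc_subset_Icc_left (by omega)) fun j hj _ => (hUpos j ?_).le) _)
    exact Icc_subset_Icc_left (by omega) hj
  obtain ⟨r, ⟨hr0, hr1⟩, hstep₁⟩ :=
    exists_eq_lineMap_of_succ hf (by omega) (hUpos _ (by simp; omega)) hwd
  obtain ⟨s, ⟨hs0, -⟩, hstep₂⟩ :=
    exists_eq_lineMap_of_succ hf (by omega) (hUpos _ (by simp; omega)) hwd'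
  set g₁ : ℚ := ((T (m + 1) * ux (m + 1) - α (m + 1) : ℤ) : ℚ)
  set g₂ : ℚ := ((T (m + 2) * ux (m + 2) - α (m + 2) : ℤ) : ℚ)
  have hg₂_le_g₁ : g₂ ≤ g₁ := Int.cast_le.2 <| sorted (m + 1) (m + 2) hi1 (by omega) (by omega)
  have hg₁_le : g₁ ≤ f (m + 1) := hstep₁ ▸ (right_le_lineMap_iff_le hr1).2
    ((lineMap_le_left_iff_le hr0).1 (hstep₁ ▸ hlocmin1))
  have hle_g₂ : f (m + 1) ≤ g₂ := (left_le_lineMap_iff_le hs0).1 (hstep₂ ▸ hlocmin2)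
  have hg₁ : g₁ = f (m + 1) := le_antisymm hg₁_le (hle_g₂.trans hg₂_le_g₁)
  have hg₂ : g₂ = f (m + 1) := le_antisymm (hg₂_le_g₁.trans hg₁_le) hle_g₂
  constructor
  · rw [hg₁] at hstep₁
    exact (lineMap_eq_right_iff.1 hstep₁.symm).resolve_right hr1.ne
  · rw [hstep₂, hg₂, lineMap_same_apply]

/-- Kernel setting, sorted so that `T_j·ux_j − α_j` is nonincreasing: if `i` is
a local minimum point of `f` in the interior of its domain, then
`f(i−1) = f(i) = f(i+1)`. -/
theorem stmt_10 (n : ℕ) (C T α ux : ℕ → ℤ) (β : ℤ)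
    (hC : ∀ i ∈ Finset.Icc 1 n, 0 < C i)
    (hT : ∀ i ∈ Finset.Icc 1 n, 0 < T i)
    (hU : ∑ j ∈ Finset.Icc 1 n, (C j : ℚ) / (T j : ℚ) ≤ 1)
    (sorted : ∀ i j : ℕ, 1 ≤ i → i ≤ j → j ≤ n →
      T j * ux j - α j ≤ T i * ux i - α i)
    (f : ℕ → ℚ)
    (hf : ∀ m : ℕ, f m =
      ((β : ℚ) + ∑ j ∈ Finset.Icc (m + 1) n, (C j : ℚ) / (T j : ℚ) * (α j : ℚ) +
        ∑ j ∈ Finset.Icc 1 m, (C j : ℚ) * (ux j : ℚ)) /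
      (1 - ∑ j ∈ Finset.Icc (m + 1) n, (C j : ℚ) / (T j : ℚ)))
    (i : ℕ) (hi1 : 1 ≤ i) (hin : i ≤ n - 1)
    (hwd : 0 < 1 - ∑ j ∈ Finset.Icc i n, (C j : ℚ) / (T j : ℚ))
    (hlocmin1 : f i ≤ f (i - 1)) (hlocmin2 : f i ≤ f (i + 1)) :
    f (i - 1) = f i ∧ f i = f (i + 1) :=
  stmt_10_general n C T α ux β hC hT sorted f hf i hi1 hin hwd hlocmin1 hlocmin2
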